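/- arXiv:1112.5706 — 6 statements merged into one kernel-verified Lean document; each statement's English description precedes it below -/
import Mathlib

section
/- Let k be a field and let X and Y be integral schemes of finite type over k. Let f : X ⟶ Y be a birational morphism, i.e. f is dominant and the stalk map at the generic point of X (equivalently, the induced homomorphism between the function fields of Y and X) is an isomorphism. Then for every point x of X the following are equivalent: (a) f is a local isomorphism at x, that is, there exists an open neighborhood U of x such that the restriction of f to the open subscheme U is an open immersion; (b) the stalk map O_{Y,f(x)} → O_{X,x} induced by f is an isomorphism. -/
open AlgebraicGeometry CategoryTheory

universe u

/-- For a birational morphism `f : X ⟶ Y` between integral schemes of finite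
type over a field `k`, and a point `x : X`, `f` is a local isomorphism at `x` (i.e. the
restriction of `f` to some open neighbourhood of `x` is an open immersion) if and only if the
stalk map `𝒪_{Y, f x} ⟶ 𝒪_{X, x}` is an isomorphism. -/
theorem stmt0 {k : Type u} [Field k]
    {X Y : Scheme.{u}} [IsIntegral X] [IsIntegral Y]
    (sX : X ⟶ Spec (CommRingCat.of k)) (sY : Y ⟶ Spec (CommRingCat.of k))
    [LocallyOfFiniteType sX] [QuasiCompact sX]
    [LocallyOfFiniteType sY] [QuasiCompact sY]
    (f : X ⟶ Y) (hf : f ≫ sY = sX)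
    [IsDominant f] (hbir : IsIso (f.stalkMap (genericPoint X)))
    (x : X) :
    (∃ U : X.Opens, x ∈ U ∧ IsOpenImmersion (U.ι ≫ f)) ↔ IsIso (f.stalkMap x) := by
  constructor
  · rintro ⟨U, hxU, hU⟩
    have h1 := Scheme.Hom.stalkMap_comp U.ι f ⟨x, hxU⟩
    have h2 : IsIso ((U.ι ≫ f).stalkMap ⟨x, hxU⟩) :=
      IsOpenImmersion.instIsIsoCommRingCatStalkMap _ _
    haveI := IsOpenImmersion.instIsIsoCommRingCatStalkMap U.ι ⟨x, hxU⟩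
    rw [h1] at h2
    exact @IsIso.of_isIso_comp_right _ _ _ _ _ (f.stalkMap (U.ι.base ⟨x, hxU⟩)) (U.ι.stalkMap ⟨x, hxU⟩) _ h2
  · intro hiso
    let φ : Spec (Y.presheaf.stalk (f.base x)) ⟶ X :=
      Spec.map (inv (f.stalkMap x)) ≫ X.fromSpecStalk x
    have hφf : φ ≫ f = Y.fromSpecStalk (f.base x) := by
      simp only [φ, Category.assoc, ← Scheme.SpecMap_stalkMap_fromSpecStalk,
        ← Spec.map_comp_assoc, IsIso.hom_inv_id, Spec.map_id, Category.id_comp]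
    have hφ : φ ≫ sX = Y.fromSpecStalk (f.base x) ≫ sY := by
      rw [← hf, ← Category.assoc, hφf]
    obtain ⟨V, hyV, g, hg1, hg2⟩ := spread_out_of_isGermInjective' sY sX φ hφ
    -- the composition g ≫ f agrees with the inclusion of V on the stalk at f x
    have key : V.fromSpecStalkOfMem (f.base x) hyV ≫ (g ≫ f) =
        V.fromSpecStalkOfMem (f.base x) hyV ≫ V.ι := by
      rw [Scheme.Opens.fromSpecStalkOfMem_ι, ← Category.assoc, ← hg1, hφf]
    have key' : V.toScheme.fromSpecStalk ⟨f.base x, hyV⟩ ≫ (g ≫ f) =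
        V.toScheme.fromSpecStalk ⟨f.base x, hyV⟩ ≫ V.ι := by
      haveI := IsOpenImmersion.instIsIsoCommRingCatStalkMap V.ι ⟨f.base x, hyV⟩
      rw [Scheme.Opens.fromSpecStalkOfMem, Category.assoc, Category.assoc] at key
      exact (cancel_epi (Spec.map (inv (V.ι.stalkMap ⟨f.base x, hyV⟩)))).mp key
    haveI inst : V.toScheme.IsGermInjectiveAt ⟨f.base x, hyV⟩ :=
      (isGermInjectiveAt_iff_of_isOpenImmersion (f := V.ι)).mp inferInstance
    obtain ⟨W, hyW, hW⟩ := spread_out_unique_of_isGermInjective' (g ≫ f) V.ι key'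
    let h : W.toScheme ⟶ X := W.ι ≫ g
    let j : W.toScheme ⟶ Y := h ≫ f
    have hj : j = W.ι ≫ V.ι := by
      simp only [j, h, Category.assoc, hW]
    haveI hjo : IsOpenImmersion j := by rw [hj]; infer_instance
    obtain ⟨z, hz⟩ : ∃ z : W.toScheme, h.base z = x := by
      refine ⟨⟨⟨f.base x, hyV⟩, hyW⟩, ?_⟩
      haveI : IsLocalHom (inv (f.stalkMap x)).hom := isLocalHom_of_isIso _
      have h2 : φ.base (IsLocalRing.closedPoint _) = x := by
        exact (congrArg (X.fromSpecStalk x).base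
          (Spec_closedPoint (f := inv (f.stalkMap x)))).trans Scheme.fromSpecStalk_closedPoint
      haveI := IsOpenImmersion.instIsIsoCommRingCatStalkMap V.ι ⟨f.base x, hyV⟩
      haveI : IsLocalHom (inv (V.ι.stalkMap ⟨f.base x, hyV⟩)).hom := isLocalHom_of_isIso _
      have h3 : (V.fromSpecStalkOfMem (f.base x) hyV).base (IsLocalRing.closedPoint _) =
          ⟨f.base x, hyV⟩ := by
        haveI := @LocallyRingedSpace.instIsLocalRingCarrierStalkCommRingCatPresheaf
          V.toScheme.toLocallyRingedSpace ⟨f.base x, hyV⟩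
        exact (congrArg (V.toScheme.fromSpecStalk ⟨f.base x, hyV⟩).base
          (Spec_closedPoint (f := inv (V.ι.stalkMap (⟨f.base x, hyV⟩ : V.toScheme))))).trans
          Scheme.fromSpecStalk_closedPoint
      show g.base ⟨f.base x, hyV⟩ = x
      refine (congrArg g.base h3.symm).trans ?_
      exact (congrArg (fun m : Spec (Y.presheaf.stalk (f.base x)) ⟶ X =>
        m.base (IsLocalRing.closedPoint _)) hg1).symm.trans h2
    clear hW key' key hg1 hg2 hφ hφf inst hyW hyV
    clear φ
    subst hz
    -- T is the preimage of the image of j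
    let T : X.Opens := f ⁻¹ᵁ j.opensRange
    have hxT : h.base z ∈ T := ⟨z, rfl⟩
    let x' : T.toScheme := ⟨h.base z, hxT⟩
    have hq0 : Set.range (T.ι ≫ f).base ⊆ Set.range j.base := by
      rintro _ ⟨t, rfl⟩
      exact t.2
    let q : T.toScheme ⟶ W.toScheme := IsOpenImmersion.lift j (T.ι ≫ f) hq0
    have hq : q ≫ j = T.ι ≫ f := IsOpenImmersion.lift_fac _ _ hq0
    have hh0 : Set.range h.base ⊆ Set.range T.ι.base := by
      rw [Scheme.Opens.range_ι]
      rintro _ ⟨w, rfl⟩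
      exact ⟨w, rfl⟩
    let h' : W.toScheme ⟶ T.toScheme := IsOpenImmersion.lift T.ι h hh0
    have hh' : h' ≫ T.ι = h := IsOpenImmersion.lift_fac _ _ hh0
    have h'q : h' ≫ q = 𝟙 _ := by
      rw [← cancel_mono j, Category.assoc, hq, ← Category.assoc, hh', Category.id_comp]
    -- stalk computations at z
    have hC : j.stalkMap z = f.stalkMap (h.base z) ≫ h.stalkMap z := Scheme.Hom.stalkMap_comp h f z
    haveI : IsIso (j.stalkMap z) := inferInstance
    haveI : IsIso (h.stalkMap z) := by
      have e : h.stalkMap z = inv (f.stalkMap (h.base z)) ≫ j.stalkMap z := by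
        rw [hC, IsIso.inv_hom_id_assoc]
      rw [e]; exact @IsIso.comp_isIso _ _ _ _ _ _ _ inferInstance ‹IsIso (j.stalkMap z)›
    have hcomp : (h.stalkMap z ≫ inv (j.stalkMap z)) ≫ f.stalkMap (h.base z) = 𝟙 _ := by
      have hinv : inv (j.stalkMap z) = inv (h.stalkMap z) ≫ inv (f.stalkMap (h.base z)) :=
        IsIso.inv_eq_of_hom_inv_id (by
          rw [hC]
          show (f.stalkMap (h.base z) ≫ h.stalkMap z) ≫ inv (h.stalkMap z) ≫
            inv (f.stalkMap (h.base z)) = 𝟙 (Y.presheaf.stalk (f.base (h.base z)))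
          simp)
      rw [hinv]
      simp
      exact IsIso.inv_hom_id (I := hiso) _
    have hTq : T.fromSpecStalkOfMem (h.base z) hxT ≫ q =
        Spec.map (f.stalkMap (h.base z)) ≫ Spec.map (inv (j.stalkMap z) (I := ‹_›)) ≫
          W.toScheme.fromSpecStalk z := by
      rw [← cancel_mono j, Category.assoc, hq, Scheme.Opens.fromSpecStalkOfMem_ι_assoc,
        ← Scheme.SpecMap_stalkMap_fromSpecStalk (f := f), Category.assoc, Category.assoc,
        ← Scheme.SpecMap_stalkMap_fromSpecStalk (f := j),
        ]
      erw [← Spec.map_comp_assoc (j.stalkMap z) (inv (j.stalkMap z)),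
        IsIso.hom_inv_id, Spec.map_id, Category.id_comp]
      rfl
    have hkey2 : T.fromSpecStalkOfMem (h.base z) hxT ≫ (q ≫ h) = X.fromSpecStalk (h.base z) :=
      calc T.fromSpecStalkOfMem (h.base z) hxT ≫ (q ≫ h)
          = (T.fromSpecStalkOfMem (h.base z) hxT ≫ q) ≫ h := by rw [Category.assoc]
        _ = Spec.map (f.stalkMap (h.base z)) ≫ Spec.map (inv (j.stalkMap z) (I := ‹_›)) ≫
              Spec.map (h.stalkMap z) ≫ X.fromSpecStalk (h.base z) := by
            rw [hTq, Category.assoc, Category.assoc,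
              ← Scheme.SpecMap_stalkMap_fromSpecStalk (f := h) (x := z)]
        _ = Spec.map ((h.stalkMap z ≫ inv (j.stalkMap z)) ≫ f.stalkMap (h.base z)) ≫
              X.fromSpecStalk (h.base z) := by
              erw [Spec.map_comp (h.stalkMap z ≫ inv (j.stalkMap z)) (f.stalkMap (h.base z)),
                Spec.map_comp (h.stalkMap z) (inv (j.stalkMap z))]
              rw [Category.assoc, Category.assoc]
              rfl
        _ = X.fromSpecStalk (h.base z) := by rw [hcomp, Spec.map_id, Category.id_comp]
    have hkey3 : T.toScheme.fromSpecStalk x' ≫ (q ≫ h) = T.toScheme.fromSpecStalk x' ≫ T.ι := by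
      have e1 : T.fromSpecStalkOfMem (h.base z) hxT ≫ (q ≫ h) =
          T.fromSpecStalkOfMem (h.base z) hxT ≫ T.ι := by
        rw [hkey2, Scheme.Opens.fromSpecStalkOfMem_ι]
      haveI := IsOpenImmersion.instIsIsoCommRingCatStalkMap T.ι ⟨h.base z, hxT⟩
      rw [Scheme.Opens.fromSpecStalkOfMem, Category.assoc, Category.assoc] at e1
      exact (cancel_epi (Spec.map (inv (T.ι.stalkMap ⟨h.base z, hxT⟩)))).mp e1
    haveI : T.toScheme.IsGermInjectiveAt x' :=
      (isGermInjectiveAt_iff_of_isOpenImmersion (f := T.ι)).mp inferInstance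
    obtain ⟨U', hxU', hU'⟩ := spread_out_unique_of_isGermInjective' (q ≫ h) T.ι hkey3
    -- now build the two-sided inverse
    have hUq : (U'.ι ≫ q) ≫ h' = U'.ι := by
      rw [← cancel_mono T.ι, Category.assoc, Category.assoc, hh']
      simpa only [Category.assoc] using hU'
    let Z₂ : W.toScheme.Opens := h' ⁻¹ᵁ U'
    have ha0 : Set.range (U'.ι ≫ q).base ⊆ Set.range Z₂.ι.base := by
      rw [Scheme.Opens.range_ι]
      rintro _ ⟨u, rfl⟩
      show h'.base ((U'.ι ≫ q).base u) ∈ U'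
      have := congr_arg (fun (m : U'.toScheme ⟶ T.toScheme) => m.base u) hUq
      simp only [Scheme.Hom.comp_apply] at this
      rw [Scheme.Hom.comp_apply, this]
      exact u.2
    let a' : U'.toScheme ⟶ Z₂.toScheme := IsOpenImmersion.lift Z₂.ι (U'.ι ≫ q) ha0
    have ha' : a' ≫ Z₂.ι = U'.ι ≫ q := IsOpenImmersion.lift_fac _ _ ha0
    have hb0 : Set.range (Z₂.ι ≫ h').base ⊆ Set.range U'.ι.base := by
      rw [Scheme.Opens.range_ι]
      rintro _ ⟨w, rfl⟩
      exact w.2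
    let b : Z₂.toScheme ⟶ U'.toScheme := IsOpenImmersion.lift U'.ι (Z₂.ι ≫ h') hb0
    have hb : b ≫ U'.ι = Z₂.ι ≫ h' := IsOpenImmersion.lift_fac _ _ hb0
    have hab : a' ≫ b = 𝟙 _ := by
      rw [← cancel_mono U'.ι, Category.assoc, hb, ← Category.assoc, ha', hUq, Category.id_comp]
    have hba : b ≫ a' = 𝟙 _ := by
      rw [← cancel_mono Z₂.ι, Category.assoc, ha', ← Category.assoc, hb, Category.assoc, h'q,
        Category.comp_id, Category.id_comp]
    haveI : IsIso a' := ⟨b, hab, hba⟩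
    haveI : IsOpenImmersion (U'.ι ≫ q) := ha' ▸ inferInstance
    refine ⟨T.ι ''ᵁ U', ⟨x', hxU', rfl⟩, ?_⟩
    have hfac : (T.ι ''ᵁ U').ι ≫ f = (T.ι.isoImage U').inv ≫ ((U'.ι ≫ q) ≫ j) := by
      rw [← Scheme.Hom.isoImage_inv_ι, Category.assoc, Category.assoc, ← hq]
      simp only [Category.assoc]
    rw [hfac]
    infer_instance
end

section
/- Let k be a field and let X and Y be integral schemes of finite type over k. Let f : X ⟶ Y be a birational morphism, i.e. f is dominant and the stalk map at the generic point of X (equivalently, the induced homomorphism between the function fields of Y and X) is an isomorphism. Then for every point x of X, the stalk map O_{Y,f(x)} → O_{X,x} induced by f is an isomorphism if and only if it is flat, i.e. O_{X,x} is a flat module over O_{Y,f(x)} via the stalk map. (In particular, under these hypotheses f is étale at x if and only if it induces an isomorphism of local rings at x.) -/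
open AlgebraicGeometry CategoryTheory

universe u

/-- Key algebraic lemma: a flat local homomorphism into a local ring that embeds into a field
in which the source has "fractions" is surjective. -/
theorem flat_local_surjective {R S K : Type u} [CommRing R] [CommRing S] [IsLocalRing S]
    [Field K] (φ : R →+* S) [IsLocalHom φ] (hfl : RingHom.Flat φ)
    (iS : S →+* K) (hiS : Function.Injective iS)
    (hfrac : ∀ s : S, ∃ a b : R, iS (φ b) ≠ 0 ∧ iS s * iS (φ b) = iS (φ a)) :
    Function.Surjective φ := by
  intro s
  obtain ⟨a, b, hb0, he⟩ := hfrac s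
  algebraize [φ]
  haveI : Module.Flat R S := hfl
  have hφ : (algebraMap R S) = φ := rfl
  obtain ⟨κ, c, y, hx, hc⟩ := Module.Flat.isTrivialRelation_of_sum_smul_eq_zero (R := R)
    (M := S) (f := fun i : ULift.{u} (Fin 2) => ![a, b] i.down)
    (x := fun i : ULift.{u} (Fin 2) => ![(1 : S), -s] i.down) (by
      rw [Fintype.sum_equiv (Equiv.ulift)
        (fun i : ULift.{u} (Fin 2) => (![a, b] i.down) • (![(1 : S), -s] i.down))
        (fun i => (![a, b] i) • (![(1 : S), -s] i)) (fun _ => rfl), Fin.sum_univ_two]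
      simp only [Matrix.cons_val_zero, Matrix.cons_val_one, Matrix.head_cons]
      rw [Algebra.smul_def, Algebra.smul_def, hφ]
      have h : φ a = φ b * s := by
        apply hiS; rw [map_mul, ← he]; ring
      rw [h]; ring)
  have h1 : (1 : S) = ∑ j, c ⟨0⟩ j • y j := hx ⟨0⟩
  have hex : ∃ j, IsUnit (c ⟨0⟩ j • y j) := by
    by_contra hno
    push_neg at hno
    have hmem : (1 : S) ∈ IsLocalRing.maximalIdeal S := by
      rw [h1]
      exact Ideal.sum_mem _ fun j _ => (IsLocalRing.mem_maximalIdeal _).mpr (hno j)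
    exact (Ideal.ne_top_iff_one _).mp (IsLocalRing.maximalIdeal.isMaximal S).ne_top hmem
  obtain ⟨j, hju⟩ := hex
  rw [Algebra.smul_def, hφ] at hju
  have hc0 : IsUnit (c ⟨0⟩ j) :=
    IsLocalHom.map_nonunit _ (isUnit_of_mul_isUnit_left hju)
  obtain ⟨u, hu⟩ := hc0
  have hcj : a * c ⟨0⟩ j + b * c ⟨1⟩ j = 0 := by
    have h2 := hc j
    rwa [Fintype.sum_equiv (Equiv.ulift)
      (fun i : ULift.{u} (Fin 2) => (![a, b] i.down) * c i j)
      (fun i => (![a, b] i) * c ⟨i⟩ j) (fun _ => rfl), Fin.sum_univ_two] at h2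
  refine ⟨-(c ⟨1⟩ j) * ↑u⁻¹, ?_⟩
  apply hiS
  have hc0S : IsUnit (iS (φ (c ⟨0⟩ j))) := (isUnit_of_mul_isUnit_left hju).map iS
  have hz : iS (φ b) * iS (φ (c ⟨0⟩ j)) ≠ 0 := mul_ne_zero hb0 hc0S.ne_zero
  apply mul_right_cancel₀ hz
  have huc : (↑u⁻¹ : R) * c ⟨0⟩ j = 1 := by rw [← hu, Units.inv_mul]
  have hac : a * c ⟨0⟩ j = -(b * c ⟨1⟩ j) := eq_neg_of_add_eq_zero_left hcj
  have key1 : -(c ⟨1⟩ j) * ↑u⁻¹ * (b * c ⟨0⟩ j) = a * c ⟨0⟩ j := by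
    calc -(c ⟨1⟩ j) * ↑u⁻¹ * (b * c ⟨0⟩ j) = -(b * c ⟨1⟩ j) * (↑u⁻¹ * c ⟨0⟩ j) := by ring
    _ = -(b * c ⟨1⟩ j) := by rw [huc, mul_one]
    _ = a * c ⟨0⟩ j := hac.symm
  calc iS (φ (-(c ⟨1⟩ j) * ↑u⁻¹)) * (iS (φ b) * iS (φ (c ⟨0⟩ j)))
      = iS (φ (-(c ⟨1⟩ j) * ↑u⁻¹ * (b * c ⟨0⟩ j))) := by simp only [map_mul]
    _ = iS (φ (a * c ⟨0⟩ j)) := by rw [key1]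
    _ = iS (φ a) * iS (φ (c ⟨0⟩ j)) := by simp only [map_mul]
    _ = (iS s * iS (φ b)) * iS (φ (c ⟨0⟩ j)) := by rw [he]
    _ = iS s * (iS (φ b) * iS (φ (c ⟨0⟩ j))) := by ring

/-- For a birational morphism `f : X ⟶ Y` between integral schemes of finite
type over a field `k`, and a point `x : X`, the stalk map `𝒪_{Y, f x} ⟶ 𝒪_{X, x}` is an
isomorphism if and only if it is flat (i.e. `𝒪_{X, x}` is a flat module over `𝒪_{Y, f x}` via
the stalk map). -/
theorem stmt1 {k : Type u} [Field k]
    {X Y : Scheme.{u}} [IsIntegral X] [IsIntegral Y]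
    (sX : X ⟶ Spec (CommRingCat.of k)) (sY : Y ⟶ Spec (CommRingCat.of k))
    [LocallyOfFiniteType sX] [QuasiCompact sX]
    [LocallyOfFiniteType sY] [QuasiCompact sY]
    (f : X ⟶ Y) (hf : f ≫ sY = sX)
    [IsDominant f] (hbir : IsIso (f.stalkMap (genericPoint X)))
    (x : X) :
    IsIso (f.stalkMap x) ↔ RingHom.Flat (f.stalkMap x).hom := by
  constructor
  · intro h
    let e := (asIso (f.stalkMap x)).commRingCatIsoToRingEquiv
    letI := (f.stalkMap x).hom.toAlgebra
    have hl : Function.LeftInverse e.symm e := e.left_inv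
    let l : (X.presheaf.stalk x) ≃ₗ[Y.presheaf.stalk (f.base x)] (Y.presheaf.stalk (f.base x)) :=
      { toFun := e.symm, invFun := e, left_inv := e.symm.left_inv, right_inv := e.left_inv,
        map_add' := map_add e.symm,
        map_smul' := fun r t => by
          simp only [RingHom.id_apply, smul_eq_mul, Algebra.smul_def]
          rw [map_mul]
          congr 1
          exact hl r }
    exact Module.Flat.of_linearEquiv l
  · intro hflat
    have hsp : genericPoint X ⤳ x := genericPoint_specializes x
    have hηY : f.base (genericPoint X) = genericPoint Y := by
      refine IsGenericPoint.eq ?_ (genericPoint_spec Y)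
      have h1 := (genericPoint_spec X).image (f := f.base) (by fun_prop)
      rwa [Set.image_univ, f.denseRange.closure_eq] at h1
    have hsp' : f.base (genericPoint X) ⤳ genericPoint Y := hηY ▸ specializes_refl _
    have hspY : genericPoint Y ⤳ f.base x := genericPoint_specializes _
    let iS : X.presheaf.stalk x ⟶ X.functionField := X.presheaf.stalkSpecializes hsp
    let aR : Y.presheaf.stalk (f.base x) ⟶ Y.functionField := Y.presheaf.stalkSpecializes hspY
    let e : Y.functionField ⟶ X.functionField :=
      Y.presheaf.stalkSpecializes hsp' ≫ f.stalkMap (genericPoint X)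
    have he_iso : IsIso e := by
      have h2 : Y.presheaf.stalkSpecializes hsp' =
          (Y.presheaf.stalkCongr (Inseparable.of_eq hηY.symm)).hom := rfl
      have : IsIso (Y.presheaf.stalkSpecializes hsp') := by rw [h2]; infer_instance
      exact inferInstanceAs (IsIso (_ ≫ _))
    have hsq : f.stalkMap x ≫ iS = aR ≫ e := by
      show f.stalkMap x ≫ X.presheaf.stalkSpecializes hsp =
        Y.presheaf.stalkSpecializes hspY ≫
          Y.presheaf.stalkSpecializes hsp' ≫ f.stalkMap (genericPoint X)
      rw [← Category.assoc, TopCat.Presheaf.stalkSpecializes_comp]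
      exact (Scheme.Hom.stalkSpecializes_stalkMap f (genericPoint X) x hsp).symm
    have hiSalg : (algebraMap (X.presheaf.stalk x) X.functionField) = iS.hom := rfl
    have haRalg : (algebraMap (Y.presheaf.stalk (f.base x)) Y.functionField) = aR.hom := rfl
    have hiS : Function.Injective iS := by
      show Function.Injective iS.hom; rw [← hiSalg]; exact IsFractionRing.injective _ _
    have haR : Function.Injective aR := by
      show Function.Injective aR.hom; rw [← haRalg]; exact IsFractionRing.injective _ _
    let e' := (asIso e).commRingCatIsoToRingEquiv
    have hsq' : ∀ r, iS (f.stalkMap x r) = e' (aR r) := fun r => by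
      have := ConcreteCategory.congr_hom hsq r
      simp at this; exact this
    have hfrac : ∀ s : X.presheaf.stalk x, ∃ a b : Y.presheaf.stalk (f.base x),
        iS (f.stalkMap x b) ≠ 0 ∧ iS s * iS (f.stalkMap x b) = iS (f.stalkMap x a) := by
      intro s
      obtain ⟨⟨a, b⟩, hab⟩ := IsLocalization.surj (M := nonZeroDivisors (Y.presheaf.stalk (f.base x)))
        (S := Y.functionField) (e'.symm (iS s))
      simp only [haRalg] at hab
      refine ⟨a, b, ?_, ?_⟩
      · rw [hsq' b]
        intro h0
        have h3 : aR b = 0 := e'.injective (by rw [h0, map_zero])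
        have h4 := IsFractionRing.to_map_ne_zero_of_mem_nonZeroDivisors
          (K := Y.functionField) b.2
        rw [haRalg] at h4
        exact h4 h3
      · have h5 := congrArg e' hab
        rw [map_mul, e'.apply_symm_apply] at h5
        rw [hsq' b, hsq' a]
        exact h5
    have hsurj : Function.Surjective (f.stalkMap x) :=
      flat_local_surjective (f.stalkMap x).hom hflat iS.hom hiS hfrac
    have hinj : Function.Injective (f.stalkMap x) := by
      intro r r' h
      apply haR
      apply e'.injective
      rw [← hsq' r, ← hsq' r', h]
    exact (ConcreteCategory.isIso_iff_bijective _).mpr ⟨hinj, hsurj⟩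
end

section
/- Let R and S be commutative local domains and let f : R → S be an injective local ring homomorphism (f maps the maximal ideal of R into the maximal ideal of S) such that the induced homomorphism between the fraction fields of R and S is surjective (hence an isomorphism). If S is flat as an R-module via f, then f is bijective, i.e. f is a ring isomorphism of R onto S. -/
universe u v

open TensorProduct

/-- Key divisibility lemma: if `S` is a flat local algebra over a local ring `R`
(with local structure map), then `f a ∈ f b • S` implies `b ∣ a`. -/
lemma key_dvd {R : Type u} {S : Type v} [CommRing R] [CommRing S]
    [IsLocalRing R] [IsLocalRing S] [Algebra R S] [Module.Flat R S]
    [IsLocalHom (algebraMap R S)]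
    (a b : R) (s : S) (h : algebraMap R S a = algebraMap R S b * s) : b ∣ a := by
  rw [← Ideal.mem_span_singleton]
  by_contra ha
  set I : Ideal R := Ideal.span {b} with hI
  set M := R ⧸ I
  set xa : M := Ideal.Quotient.mk I a with hxa
  have hxa0 : xa ≠ 0 := fun h0 => ha (Ideal.Quotient.eq_zero_iff_mem.mp h0)
  -- the annihilator of xa
  set φ : R →ₗ[R] M := LinearMap.toSpanSingleton R M xa with hφ
  set J : Ideal R := LinearMap.ker φ with hJ
  have hJprop : J ≠ ⊤ := by
    intro htop
    have h1 : (1 : R) ∈ J := htop ▸ Submodule.mem_top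
    have : (1 : R) • xa = 0 := h1
    simp at this
    exact hxa0 this
  have hJle : J ≤ IsLocalRing.maximalIdeal R := IsLocalRing.le_maximalIdeal hJprop
  -- the injective map R ⧸ J →ₗ M
  set ψ : (R ⧸ J) →ₗ[R] M := Submodule.liftQ J φ le_rfl with hψ
  have hψinj : Function.Injective ψ := by
    rw [← LinearMap.ker_eq_bot, hψ, Submodule.ker_liftQ_eq_bot _ _ _ le_rfl]
  -- tensor with S
  have hT : Function.Injective (LinearMap.lTensor S ψ) :=
    Module.Flat.lTensor_preserves_injective_linearMap ψ hψinj
  have hzero : (1 : S) ⊗ₜ[R] xa = (0 : S ⊗[R] M) := by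
    have hsm : ∀ r : R, r • (Ideal.Quotient.mk I (1 : R) : M) = Ideal.Quotient.mk I r := by
      intro r
      have := (Submodule.Quotient.mk_smul (I : Submodule R R) r (1 : R)).symm
      simpa using this
    have h1 : (1 : S) ⊗ₜ[R] xa = (a • (1 : S)) ⊗ₜ[R] (Ideal.Quotient.mk I (1 : R)) := by
      rw [smul_tmul, hsm]
    rw [h1]
    have h2 : a • (1 : S) = b • s := by
      rw [Algebra.smul_def, Algebra.smul_def, mul_one, h]
    rw [h2, smul_tmul, hsm]
    have h3 : (Ideal.Quotient.mk I b : M) = 0 := by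
      rw [Ideal.Quotient.eq_zero_iff_mem]
      exact Ideal.mem_span_singleton_self b
    rw [h3, tmul_zero]
  have himg : LinearMap.lTensor S ψ ((1 : S) ⊗ₜ[R] Submodule.Quotient.mk (1 : R)) = 0 := by
    rw [LinearMap.lTensor_tmul]
    have : ψ (Submodule.Quotient.mk (1 : R)) = xa := by
      show φ 1 = xa
      simp [hφ]
    rw [this, hzero]
  have hzero' : (1 : S) ⊗ₜ[R] (Submodule.Quotient.mk (1 : R) : R ⧸ J) = 0 := hT (by simpa using himg)
  -- now derive contradiction: image under tensorQuotEquivQuotSMul is mk 1 ≠ 0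
  have := congrArg (TensorProduct.tensorQuotEquivQuotSMul S J) hzero'
  rw [map_zero] at this
  have heq : (TensorProduct.tensorQuotEquivQuotSMul S J)
      ((1 : S) ⊗ₜ[R] (Submodule.Quotient.mk (1 : R) : R ⧸ J)) =
      Submodule.Quotient.mk ((1 : R) • (1 : S)) :=
    TensorProduct.tensorQuotEquivQuotSMul_tmul_mk J (1 : S) (1 : R)
  rw [heq] at this
  -- so 1 ∈ J • ⊤
  have hmem : (1 : S) ∈ (J • (⊤ : Submodule R S)) := by
    rw [← Submodule.Quotient.mk_eq_zero]
    simpa using this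
  have hle : (J • (⊤ : Submodule R S)) ≤
      (IsLocalRing.maximalIdeal S).restrictScalars R := by
    refine Submodule.smul_le.mpr fun r hr x _ => ?_
    have hr' : algebraMap R S r ∈ IsLocalRing.maximalIdeal S := by
      intro hu
      exact hJle hr (IsLocalHom.map_nonunit r hu)
    simpa [Algebra.smul_def] using Ideal.mul_mem_right x _ hr'
  exact (IsLocalRing.maximalIdeal.isMaximal S).ne_top (Ideal.eq_top_of_isUnit_mem _ (hle hmem) isUnit_one)

/-- Let `f : R → S` be an injective local homomorphism between local domains
inducing a surjective (hence bijective) homomorphism of fraction fields. If `S` is flat over `R`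
via `f`, then `f` is bijective. -/
theorem stmt2 {R : Type u} {S : Type v} [CommRing R] [CommRing S]
    [IsDomain R] [IsDomain S] [IsLocalRing R] [IsLocalRing S]
    (f : R →+* S) [IsLocalHom f] (hinj : Function.Injective f)
    (hsurj : Function.Surjective
      (IsFractionRing.map hinj : FractionRing R →+* FractionRing S))
    (hflat : f.Flat) :
    Function.Bijective f := by
  refine ⟨hinj, fun s => ?_⟩
  letI : Algebra R S := f.toAlgebra
  haveI : Module.Flat R S := hflat
  have halg : algebraMap R S = f := rfl
  haveI : IsLocalHom (algebraMap R S) := by rw [halg]; infer_instance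
  -- write s as f a / f b
  obtain ⟨x, hx⟩ := hsurj (algebraMap S (FractionRing S) s)
  obtain ⟨⟨a, b⟩, hab⟩ : ∃ p : R × nonZeroDivisors R, IsLocalization.mk' (FractionRing R) p.1 p.2 = x :=
    IsLocalization.mk'_surjective (nonZeroDivisors R) x
  have hspec := IsLocalization.mk'_spec (FractionRing R) a b
  have hmap := congrArg (IsFractionRing.map hinj : FractionRing R →+* FractionRing S) hspec
  rw [map_mul, hab, hx] at hmap
  have hmapb : (IsFractionRing.map hinj : FractionRing R →+* FractionRing S)
      (algebraMap R (FractionRing R) (b : R)) = algebraMap S (FractionRing S) (f (b : R)) :=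
    IsLocalization.map_eq _ _
  have hmapa : (IsFractionRing.map hinj : FractionRing R →+* FractionRing S)
      (algebraMap R (FractionRing R) a) = algebraMap S (FractionRing S) (f a) :=
    IsLocalization.map_eq _ _
  rw [hmapb, hmapa, ← map_mul] at hmap
  have hkey : f a = f (b : R) * s := by
    have := IsFractionRing.injective S (FractionRing S) hmap
    rw [← this]; ring
  obtain ⟨c, hc⟩ := key_dvd a (b : R) s (by rw [halg]; exact hkey)
  refine ⟨c, ?_⟩
  have hb0 : f (b : R) ≠ 0 := fun h0 => nonZeroDivisors.coe_ne_zero b (hinj (by simpa using h0))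
  apply mul_left_cancel₀ hb0
  rw [← hkey, hc, map_mul]
end

section
/- Let R and S be commutative Noetherian local rings with maximal ideals m_R and m_S, and let f : R → S be a flat local ring homomorphism (S is flat as an R-module via f) such that m_S is generated by the image of m_R (i.e. m_S = m_R·S) and the induced homomorphism of residue fields R/m_R → S/m_S is bijective. Then for every n ≥ 1 the induced ring homomorphism R/m_R^n → S/m_S^n is bijective. (This is the implication 'f étale at x implies the map of completed local rings is an isomorphism' in the local-isomorphism criterion.) -/
universe u v

open IsLocalRing TensorProduct

theorem aux_mem_of_map_mem {R : Type u} {S : Type v} [CommRing R] [CommRing S] [Algebra R S]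
    [Module.FaithfullyFlat R S] (I : Ideal R) (x : R)
    (hx : algebraMap R S x ∈ I.map (algebraMap R S)) : x ∈ I := by
  have key : ∀ s : S, (Ideal.Quotient.mk I x : R ⧸ I) ⊗ₜ[R] s = (0 : (R ⧸ I) ⊗[R] S) := by
    intro s
    apply (TensorProduct.quotTensorEquivQuotSMul S I).injective
    rw [TensorProduct.quotTensorEquivQuotSMul_mk_tmul, map_zero,
      Submodule.Quotient.mk_eq_zero, Ideal.smul_top_eq_map]
    show x • s ∈ (I.map (algebraMap R S) : Ideal S)
    rw [Algebra.smul_def]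
    exact Ideal.mul_mem_right s _ hx
  have hg : (LinearMap.toSpanSingleton R (R ⧸ I) (Ideal.Quotient.mk I x)) = 0 := by
    rw [Module.FaithfullyFlat.zero_iff_rTensor_zero R S]
    apply TensorProduct.ext'
    intro r s
    simp only [LinearMap.rTensor_tmul, LinearMap.toSpanSingleton_apply, LinearMap.zero_apply]
    rw [← TensorProduct.smul_tmul', key, smul_zero]
  have h1 : (Ideal.Quotient.mk I x : R ⧸ I) = 0 := by
    have := congrFun (congrArg DFunLike.coe hg) 1
    simpa using this
  rwa [Ideal.Quotient.eq_zero_iff_mem] at h1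

theorem aux_ff {R : Type u} {S : Type v} [CommRing R] [CommRing S]
    [IsLocalRing R] [IsLocalRing S] [Algebra R S] [Module.Flat R S]
    (hmax : Ideal.map (algebraMap R S) (maximalIdeal R) = maximalIdeal S) :
    Module.FaithfullyFlat R S := by
  rw [Module.FaithfullyFlat.iff_flat_and_ideal_smul_eq_top]
  refine ⟨inferInstance, fun I hI => ?_⟩
  by_contra hne
  have hle : I ≤ maximalIdeal R := le_maximalIdeal hne
  have h1 : (1 : S) ∈ I • (⊤ : Submodule R S) := by rw [hI]; trivial
  rw [Ideal.smul_top_eq_map] at h1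
  have h2 : (1 : S) ∈ I.map (algebraMap R S) := h1
  have h3 : I.map (algebraMap R S) ≤ maximalIdeal S := hmax ▸ Ideal.map_mono hle
  exact (maximalIdeal.isMaximal S).ne_top (Ideal.eq_top_iff_one _ |>.mpr (h3 h2))

/-- Let `R → S` be a flat local homomorphism of Noetherian local rings such
that the maximal ideal of `S` is generated by the image of the maximal ideal of `R` and the
induced map of residue fields is bijective. Then for every `n ≥ 1` the induced ring homomorphism
`R/m_R^n → S/m_S^n` is bijective. -/
theorem stmt3 {R : Type u} {S : Type v} [CommRing R] [CommRing S]
    [IsNoetherianRing R] [IsNoetherianRing S] [IsLocalRing R] [IsLocalRing S]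
    [Algebra R S] [IsLocalHom (algebraMap R S)] [Module.Flat R S]
    (hmax : Ideal.map (algebraMap R S) (maximalIdeal R) = maximalIdeal S)
    (hres : Function.Bijective (ResidueField.map (algebraMap R S)))
    (n : ℕ) (hn : 1 ≤ n)
    (H : (maximalIdeal R) ^ n ≤ Ideal.comap (algebraMap R S) ((maximalIdeal S) ^ n)) :
    Function.Bijective (Ideal.quotientMap ((maximalIdeal S) ^ n) (algebraMap R S) H) := by
  haveI : Module.FaithfullyFlat R S := aux_ff hmax
  set f := algebraMap R S with hf
  have hpow : ∀ k : ℕ, (maximalIdeal S) ^ k = Ideal.map f ((maximalIdeal R) ^ k) := by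
    intro k; rw [Ideal.map_pow, hmax]
  -- residue-level surjectivity
  have res_surj : ∀ s : S, ∃ r : R, s - f r ∈ maximalIdeal S := by
    intro s
    obtain ⟨y, hy⟩ := hres.surjective (residue S s)
    obtain ⟨r, rfl⟩ := Ideal.Quotient.mk_surjective y
    refine ⟨r, ?_⟩
    have : residue S (f r) = residue S s := by
      rw [← ResidueField.map_residue]; exact hy
    have h0 : residue S (s - f r) = 0 := by rw [map_sub, this, sub_self]
    exact Ideal.Quotient.eq_zero_iff_mem.mp h0
  -- approximation step
  have step : ∀ (k : ℕ) (t : S), t ∈ (maximalIdeal S) ^ k →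
      ∃ r ∈ (maximalIdeal R) ^ k, t - f r ∈ (maximalIdeal S) ^ (k + 1) := by
    intro k t ht
    rw [hpow k, Ideal.map, Ideal.span] at ht
    induction ht using Submodule.span_induction with
    | mem x hx =>
      obtain ⟨a, ha, rfl⟩ := hx
      exact ⟨a, ha, by simp⟩
    | zero => exact ⟨0, zero_mem _, by simp⟩
    | add x y hx hy ihx ihy =>
      obtain ⟨r₁, hr₁, hd₁⟩ := ihx
      obtain ⟨r₂, hr₂, hd₂⟩ := ihy
      refine ⟨r₁ + r₂, add_mem hr₁ hr₂, ?_⟩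
      have : x + y - f (r₁ + r₂) = (x - f r₁) + (y - f r₂) := by rw [map_add]; ring
      rw [this]; exact add_mem hd₁ hd₂
    | smul a x hx ih =>
      obtain ⟨r, hr, hd⟩ := ih
      obtain ⟨r', hr'⟩ := res_surj a
      refine ⟨r' * r, Ideal.mul_mem_left _ _ hr, ?_⟩
      have hx' : x ∈ (maximalIdeal S) ^ k := by
        rw [hpow k, Ideal.map, Ideal.span]; exact hx
      have heq : a • x - f (r' * r) = (a - f r') * x + f r' * (x - f r) := by
        rw [map_mul]; ring_nf
      rw [heq]
      refine add_mem ?_ (Ideal.mul_mem_left _ _ hd)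
      have : (a - f r') * x ∈ maximalIdeal S * (maximalIdeal S) ^ k :=
        Ideal.mul_mem_mul hr' hx'
      rwa [← pow_succ'] at this
  -- surjectivity onto S / m_S^k for every k
  have surj : ∀ (k : ℕ) (s : S), ∃ r : R, s - f r ∈ (maximalIdeal S) ^ k := by
    intro k
    induction k with
    | zero => intro s; exact ⟨0, by simp⟩
    | succ k ih =>
      intro s
      obtain ⟨r, hrs⟩ := ih s
      obtain ⟨r', _, hd⟩ := step k (s - f r) hrs
      exact ⟨r + r', by rw [map_add]; convert hd using 1; ring⟩
  constructor
  · rw [injective_iff_map_eq_zero]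
    intro a ha
    obtain ⟨x, rfl⟩ := Ideal.Quotient.mk_surjective a
    rw [Ideal.quotientMap_mk, Ideal.Quotient.eq_zero_iff_mem] at ha
    rw [Ideal.Quotient.eq_zero_iff_mem]
    exact aux_mem_of_map_mem _ x (by rwa [hpow n] at ha)
  · intro y
    obtain ⟨s, rfl⟩ := Ideal.Quotient.mk_surjective y
    obtain ⟨r, hr⟩ := surj n s
    refine ⟨Ideal.Quotient.mk _ r, ?_⟩
    rw [Ideal.quotientMap_mk, Ideal.Quotient.eq]
    simpa [neg_sub] using neg_mem hr
end

section
/- Let R and S be commutative Noetherian local rings with maximal ideals m_R and m_S, and let f : R → S be a local ring homomorphism such that for every n ≥ 1 the induced ring homomorphism R/m_R^n → S/m_S^n is bijective. Then S is flat as an R-module via f. (This is the implication 'the map of maximal-adic completions is an isomorphism implies f is flat' in the local-isomorphism criterion.) -/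
universe u v

open IsLocalRing

open TensorProduct

/-- Over a faithfully flat algebra, `x ↦ 1 ⊗ x` is injective. -/
lemma aux_one_tmul_injective {S : Type*} (C : Type*) [CommRing S] [CommRing C] [Algebra S C]
    [Module.FaithfullyFlat S C] (N : Type*) [AddCommGroup N] [Module S N] :
    Function.Injective (TensorProduct.mk S C N 1) := by
  rw [injective_iff_map_eq_zero]
  intro n hn
  have hmem : n ∈ Submodule.span S {n} := Submodule.mem_span_singleton_self n
  set N' : Submodule S N := Submodule.span S {n} with hN'
  have hinj : Function.Injective (LinearMap.lTensor C N'.subtype) :=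
    Module.Flat.lTensor_preserves_injective_linearMap _ N'.injective_subtype
  have hx0 : (1 : C) ⊗ₜ[S] (⟨n, hmem⟩ : N') = 0 := by
    apply hinj
    simpa using hn
  have hall : ∀ z : C ⊗[S] N', z = 0 := by
    intro z
    induction z using TensorProduct.induction_on with
    | zero => rfl
    | tmul c m =>
      obtain ⟨s, hs⟩ := Submodule.mem_span_singleton.mp m.2
      have hm : m = s • (⟨n, hmem⟩ : N') := Subtype.ext hs.symm
      calc c ⊗ₜ[S] m = (s • c) ⊗ₜ[S] (⟨n, hmem⟩ : N') := by
            rw [hm, tmul_smul, TensorProduct.smul_tmul']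
        _ = (s • c) • ((1 : C) ⊗ₜ[S] (⟨n, hmem⟩ : N')) := by
            rw [TensorProduct.smul_tmul', smul_eq_mul, mul_one]
        _ = 0 := by rw [hx0, smul_zero]
    | add x y hx hy => rw [hx, hy, add_zero]
  haveI : Subsingleton (C ⊗[S] N') := subsingleton_of_forall_eq 0 hall
  haveI := Module.FaithfullyFlat.lTensor_reflects_triviality S C N'
  have : (⟨n, hmem⟩ : N') = 0 := Subsingleton.elim _ _
  simpa using congrArg Subtype.val this

/-- Descent of flatness: if `C` is flat over `R` and faithfully flat over `S`,
then `S` is flat over `R`. -/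
lemma aux_flat_descent {R : Type u} {S : Type v} (C : Type*) [CommRing R] [CommRing S]
    [CommRing C] [Algebra R S] [Algebra S C] [Algebra R C] [IsScalarTower R S C]
    [Module.Flat R C] [Module.FaithfullyFlat S C] : Module.Flat R S := by
  rw [Module.Flat.iff_lTensor_injective']
  intro I
  set φ : S →ₗ[R] C := (Algebra.linearMap S C).restrictScalars R with hφ
  set ε := TensorProduct.AlgebraTensorModule.cancelBaseChange R S S C (↥I) with hε
  have key : ∀ x : S ⊗[R] I, LinearMap.rTensor (↥I) φ x = ε ((1 : C) ⊗ₜ[S] x) := by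
    intro x
    induction x using TensorProduct.induction_on with
    | zero => rw [tmul_zero, LinearMap.map_zero, ε.map_zero]
    | tmul s i =>
      simp only [LinearMap.rTensor_tmul, hε,
        TensorProduct.AlgebraTensorModule.cancelBaseChange_tmul]
      congr 1
      simp [hφ, Algebra.algebraMap_eq_smul_one]
    | add x y hx hy =>
      rw [map_add, TensorProduct.tmul_add, ε.map_add, hx, hy]
  have h1 : Function.Injective (LinearMap.rTensor (↥I) φ) := by
    intro a b hab
    rw [key, key] at hab
    exact aux_one_tmul_injective C (S ⊗[R] ↥I) (ε.injective hab)
  have h2 : Function.Injective (LinearMap.lTensor C I.subtype) :=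
    Module.Flat.iff_lTensor_injective'.mp inferInstance I
  have h3 : LinearMap.lTensor C I.subtype ∘ₗ LinearMap.rTensor (↥I) φ =
      LinearMap.rTensor R φ ∘ₗ LinearMap.lTensor S I.subtype := by
    rw [LinearMap.lTensor_comp_rTensor, LinearMap.rTensor_comp_lTensor]
  have h4 : Function.Injective (LinearMap.rTensor R φ ∘ₗ LinearMap.lTensor S I.subtype) := by
    rw [← h3]
    exact h2.comp h1
  exact Function.Injective.of_comp h4

lemma aux_faithfullyFlat (S : Type v) [CommRing S] [IsNoetherianRing S] [IsLocalRing S] :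
    Module.FaithfullyFlat S (AdicCompletion (maximalIdeal S) S) := by
  set J := maximalIdeal S with hJ
  refine { toFlat := inferInstance, submodule_ne_top := ?_ }
  intro m hm htop
  obtain rfl : m = J := IsLocalRing.eq_maximalIdeal hm
  set ev := AdicCompletion.evalₐ J 1 with hev
  have h1 : (1 : AdicCompletion J S) ∈ J • (⊤ : Submodule S (AdicCompletion J S)) :=
    by rw [htop]; exact Submodule.mem_top
  have h2 : ev 1 ∈ Submodule.map ev.toLinearMap (J • (⊤ : Submodule S (AdicCompletion J S))) :=
    Submodule.mem_map_of_mem h1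
  rw [Submodule.map_smul''] at h2
  have h3 : ev 1 ∈ J • (⊤ : Submodule S (S ⧸ J ^ 1)) :=
    Submodule.smul_mono le_rfl le_top h2
  have h4 : J • (⊤ : Submodule S (S ⧸ J ^ 1)) ≤ ⊥ := by
    rw [Submodule.smul_le]
    intro r hr x _
    obtain ⟨y, rfl⟩ := Ideal.Quotient.mk_surjective x
    rw [Submodule.mem_bot]
    have : r • (Ideal.Quotient.mk (J ^ 1)) y = (Ideal.Quotient.mk (J ^ 1)) (r * y) := rfl
    rw [this, Ideal.Quotient.eq_zero_iff_mem, pow_one]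
    exact Ideal.mul_mem_right y J hr
  have h5 : (1 : S ⧸ J ^ 1) = 0 := by
    have := h4 h3
    rw [Submodule.mem_bot] at this
    rwa [map_one ev] at this
  have h6 : (1 : S) ∈ J ^ 1 := by
    rwa [← Ideal.Quotient.eq_zero_iff_mem, map_one]
  rw [pow_one] at h6
  exact (IsLocalRing.maximalIdeal.isMaximal S).ne_top ((Ideal.eq_top_iff_one J).mpr h6)

/-- Let `R → S` be a local homomorphism of Noetherian local rings such that for
every `n ≥ 1` the induced ring homomorphism `R/m_R^n → S/m_S^n` is bijective. Then `S` is flat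
as an `R`-module. -/
theorem stmt4 {R : Type u} {S : Type v} [CommRing R] [CommRing S]
    [IsNoetherianRing R] [IsNoetherianRing S] [IsLocalRing R] [IsLocalRing S]
    [Algebra R S] [IsLocalHom (algebraMap R S)]
    (H : ∀ n : ℕ, (maximalIdeal R) ^ n ≤ Ideal.comap (algebraMap R S) ((maximalIdeal S) ^ n))
    (hbij : ∀ n : ℕ, 1 ≤ n →
      Function.Bijective (Ideal.quotientMap ((maximalIdeal S) ^ n) (algebraMap R S) (H n))) :
    Module.Flat R S := by
  set I := maximalIdeal R with hI
  set J := maximalIdeal S with hJ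
  letI : Algebra R (AdicCompletion J S) :=
    ((algebraMap S (AdicCompletion J S)).comp (algebraMap R S)).toAlgebra
  haveI : IsScalarTower R S (AdicCompletion J S) := inferInstance
  have hIn : ∀ n : ℕ, (I ^ n • ⊤ : Ideal R) = I ^ n := fun n => by ext x; simp
  have hJn : ∀ n : ℕ, (J ^ n • ⊤ : Ideal S) = J ^ n := fun n => by ext x; simp
  let g : ∀ n : ℕ, R ⧸ (I ^ n • ⊤ : Ideal R) → S ⧸ (J ^ n • ⊤ : Ideal S) := fun n x =>
    (Ideal.quotientEquivAlgOfEq S (hJn n).symm)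
      ((Ideal.quotientMap (J ^ n) (algebraMap R S) (H n))
        ((Ideal.quotientEquivAlgOfEq R (hIn n)) x))
  have hg_mk : ∀ (n : ℕ) (r : R), g n (Ideal.Quotient.mk _ r) =
      Ideal.Quotient.mk _ (algebraMap R S r) := fun n r => by
    show (Ideal.quotientEquivAlgOfEq S (hJn n).symm)
        ((Ideal.quotientMap (J ^ n) (algebraMap R S) (H n))
          ((Ideal.quotientEquivAlgOfEq R (hIn n)) (Ideal.Quotient.mk _ r))) = _
    rw [Ideal.quotientEquivAlgOfEq_mk, Ideal.quotientMap_mk, Ideal.quotientEquivAlgOfEq_mk]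
  have hgbij : ∀ n, Function.Bijective (g n) := by
    intro n
    rcases Nat.eq_zero_or_pos n with h0 | h1
    · subst h0
      haveI : Subsingleton (R ⧸ (I ^ 0 • ⊤ : Ideal R)) := by
        refine Submodule.Quotient.subsingleton_iff.mpr ?_
        rw [hIn 0, pow_zero, Ideal.one_eq_top]
      haveI : Subsingleton (S ⧸ (J ^ 0 • ⊤ : Ideal S)) := by
        refine Submodule.Quotient.subsingleton_iff.mpr ?_
        rw [hJn 0, pow_zero, Ideal.one_eq_top]
      exact ⟨fun a b _ => Subsingleton.elim a b,
        fun y => ⟨Ideal.Quotient.mk _ 0, Subsingleton.elim _ _⟩⟩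
    · exact (Ideal.quotientEquivAlgOfEq S (hJn n).symm).bijective.comp
        ((hbij n h1).comp (Ideal.quotientEquivAlgOfEq R (hIn n)).bijective)
  have hgcompat : ∀ {m n : ℕ} (hmn : m ≤ n) (x : R ⧸ (I ^ n • ⊤ : Ideal R)),
      AdicCompletion.transitionMap J S hmn (g n x) =
        g m (AdicCompletion.transitionMap I R hmn x) := by
    intro m n hmn x
    obtain ⟨r, rfl⟩ := Ideal.Quotient.mk_surjective x
    rw [hg_mk, AdicCompletion.transitionMap_ideal_mk, AdicCompletion.transitionMap_ideal_mk,
      hg_mk]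
  have hg_add : ∀ (n : ℕ) x y, g n (x + y) = g n x + g n y := fun n x y => by simp [g]
  have hg_smul : ∀ (n : ℕ) (r : R) x, g n (r • x) = algebraMap R S r • g n x := by
    intro n r x
    obtain ⟨y, rfl⟩ := Ideal.Quotient.mk_surjective x
    have e1 : r • (Ideal.Quotient.mk (I ^ n • ⊤ : Ideal R)) y =
        (Ideal.Quotient.mk (I ^ n • ⊤ : Ideal R)) (r * y) := rfl
    have e2 : algebraMap R S r • (Ideal.Quotient.mk (J ^ n • ⊤ : Ideal S)) (algebraMap R S y) =
        (Ideal.Quotient.mk (J ^ n • ⊤ : Ideal S)) (algebraMap R S r * algebraMap R S y) := rfl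
    rw [e1, hg_mk, hg_mk, e2, ← map_mul]
  have hRsmul : ∀ (r : R) (y : AdicCompletion J S) (n : ℕ),
      (r • y).val n = (algebraMap R S r) • y.val n := fun r y n => by
    rw [← algebraMap_smul S r y, AdicCompletion.val_smul_apply]
  let F0 : AdicCompletion I R → AdicCompletion J S := fun f =>
    ⟨fun n => g n (f.val n), fun {m n} hmn => by rw [hgcompat hmn, f.property hmn]⟩
  have hF0val : ∀ f n, (F0 f).val n = g n (f.val n) := fun _ _ => rfl
  let F : AdicCompletion I R →ₗ[R] AdicCompletion J S :=
    { toFun := F0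
      map_add' := fun f f' => AdicCompletion.ext fun n => by
        show g n ((f + f').val n) = (F0 f + F0 f').val n
        rw [AdicCompletion.val_add_apply, AdicCompletion.val_add_apply, hF0val, hF0val, hg_add]
      map_smul' := fun r f => AdicCompletion.ext fun n => by
        show g n ((r • f).val n) = (r • F0 f).val n
        rw [AdicCompletion.val_smul_apply, hg_smul, hRsmul, hF0val] }
  have hFbij : Function.Bijective F := by
    constructor
    · intro f f' h
      ext n
      exact (hgbij n).1 (congrArg (fun z => AdicCompletion.eval J S n z) h)
    · intro y
      refine ⟨⟨fun n => (Equiv.ofBijective _ (hgbij n)).symm (y.val n), ?_⟩, ?_⟩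
      · intro m n hmn
        apply (hgbij m).1
        rw [← hgcompat hmn, Equiv.ofBijective_apply_symm_apply _ (hgbij n),
          Equiv.ofBijective_apply_symm_apply _ (hgbij m)]
        exact y.property hmn
      · ext n
        exact Equiv.ofBijective_apply_symm_apply _ (hgbij n) _
  let e : AdicCompletion I R ≃ₗ[R] AdicCompletion J S := LinearEquiv.ofBijective F hFbij
  haveI : Module.Flat R (AdicCompletion J S) :=
    Module.Flat.of_linearEquiv e.symm
  haveI : Module.FaithfullyFlat S (AdicCompletion J S) := aux_faithfullyFlat S
  exact @aux_flat_descent R S (AdicCompletion J S) _ _ _ _ _ (AdicCompletion.instAlgebra J) _ _ _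
end

section
/- Let k be an algebraically closed field of characteristic zero. Let X and Y be integral separated schemes of finite type over k with Y normal, and let f : X ⟶ Y be a birational morphism, i.e. f is dominant and the stalk map at the generic point of X (equivalently, the induced homomorphism between the function fields of Y and X) is an isomorphism. Let U₀ ⊆ X be the set of points at which f is a local isomorphism. Then U₀ is open in X and the restriction of f to the open subscheme U₀ is an open immersion; in particular f induces an isomorphism of k-schemes from U₀ onto the open subscheme f(U₀) of Y. -/
open AlgebraicGeometry CategoryTheory

universe u

/-- A dominant morphism between irreducible schemes maps the generic point to the
generic point. -/
lemma stmt5_genericPoint_map {X Y : Scheme.{u}} [IrreducibleSpace X] [IrreducibleSpace Y]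
    (f : X ⟶ Y) [IsDominant f] : f.base (genericPoint X) = genericPoint Y := by
  apply ((genericPoint_spec Y).eq _).symm
  have h := (genericPoint_spec X).image (f := f.base) (by fun_prop)
  rwa [Set.image_univ, f.denseRange.closure_range] at h

/-- Injectivity on the locus of local isomorphism: if `f : X ⟶ Y` is dominant with `X`
separated (over anything, encoded as `[IsSeparated f]` after using separatedness of the
structure morphisms) and `x₁, x₂` lie in opens on which `f` restricts to open immersions and
have the same image, then `x₁ = x₂`. -/
lemma stmt5_inj {X Y : Scheme.{u}} [IsIntegral X] [IsIntegral Y]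
    (f : X ⟶ Y) [IsDominant f] [IsSeparated f] {x₁ x₂ : X}
    {U₁ U₂ : X.Opens} (hx₁ : x₁ ∈ U₁) (hx₂ : x₂ ∈ U₂)
    [IsOpenImmersion (U₁.ι ≫ f)] [IsOpenImmersion (U₂.ι ≫ f)]
    (hfx : f.base x₁ = f.base x₂) : x₁ = x₂ := by
  set h₁ := U₁.ι ≫ f with hh₁
  set h₂ := U₂.ι ≫ f with hh₂
  have hb₁ : h₁.base ⟨x₁, hx₁⟩ = f.base x₁ := rfl
  have hb₂ : h₂.base ⟨x₂, hx₂⟩ = f.base x₂ := rfl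
  set V : Y.Opens := h₁.opensRange ⊓ h₂.opensRange with hV
  have hvmem : f.base x₁ ∈ V := ⟨⟨⟨x₁, hx₁⟩, hb₁⟩, ⟨⟨x₂, hx₂⟩, hfx ▸ hb₂⟩⟩
  haveI hNV : Nonempty V := ⟨⟨_, hvmem⟩⟩
  haveI : IsIntegral V.toScheme := isIntegral_of_isOpenImmersion V.ι
  have hle₁ : Set.range V.ι.base ⊆ Set.range h₁.base := by
    rw [Scheme.Opens.range_ι]
    exact fun y hy => hy.1
  have hle₂ : Set.range V.ι.base ⊆ Set.range h₂.base := by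
    rw [Scheme.Opens.range_ι]
    exact fun y hy => hy.2
  set g₁ : V.toScheme ⟶ U₁.toScheme := IsOpenImmersion.lift h₁ V.ι hle₁ with hg₁
  set g₂ : V.toScheme ⟶ U₂.toScheme := IsOpenImmersion.lift h₂ V.ι hle₂ with hg₂
  have fac₁ : g₁ ≫ h₁ = V.ι := IsOpenImmersion.lift_fac _ _ _
  have fac₂ : g₂ ≫ h₂ = V.ι := IsOpenImmersion.lift_fac _ _ _
  set U₁₂ : X.Opens := U₁ ⊓ U₂ with hU₁₂
  have hξ : genericPoint X ∈ U₁₂ :=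
    ⟨(genericPoint_specializes x₁).mem_open U₁.isOpen hx₁,
     (genericPoint_specializes x₂).mem_open U₂.isOpen hx₂⟩
  haveI : Nonempty U₁₂ := ⟨⟨_, hξ⟩⟩
  haveI : IsIntegral U₁₂.toScheme := isIntegral_of_isOpenImmersion U₁₂.ι
  have hle : Set.range (U₁₂.ι ≫ f).base ⊆ Set.range V.ι.base := by
    rw [Scheme.Opens.range_ι]
    rintro y ⟨u, rfl⟩
    exact ⟨⟨⟨u.1, u.2.1⟩, rfl⟩, ⟨⟨u.1, u.2.2⟩, rfl⟩⟩
  set ι : U₁₂.toScheme ⟶ V.toScheme := IsOpenImmersion.lift V.ι (U₁₂.ι ≫ f) hle with hι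
  have facι : ι ≫ V.ι = U₁₂.ι ≫ f := IsOpenImmersion.lift_fac _ _ _
  haveI : IsDominant ι := by
    constructor
    have hgen : V.ι.base (ι.base ⟨_, hξ⟩) = genericPoint Y := by
      show (ι ≫ V.ι).base ⟨_, hξ⟩ = _; rw [facι]
      exact stmt5_genericPoint_map f
    have hgen' : ι.base ⟨_, hξ⟩ = genericPoint V.toScheme := by
      apply (Scheme.Opens.ι V).isOpenEmbedding.injective
      rw [hgen, genericPoint_eq_of_isOpenImmersion V.ι]
    have : Dense ({genericPoint V.toScheme} : Set V.toScheme) :=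
      dense_iff_closure_eq.2 (genericPoint_spec V.toScheme)
    exact this.mono (Set.singleton_subset_iff.2 ⟨⟨_, hξ⟩, hgen'⟩)
  have key₁ : ι ≫ g₁ = X.homOfLE (inf_le_left : U₁₂ ≤ U₁) := by
    rw [← cancel_mono h₁, Category.assoc, fac₁, facι, hh₁, ← Category.assoc, X.homOfLE_ι]
  have key₂ : ι ≫ g₂ = X.homOfLE (inf_le_right : U₁₂ ≤ U₂) := by
    rw [← cancel_mono h₂, Category.assoc, fac₂, facι, hh₂, ← Category.assoc, X.homOfLE_ι]
  have e₁ : ι ≫ (g₁ ≫ U₁.ι) = U₁₂.ι := by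
    rw [← Category.assoc, key₁, X.homOfLE_ι]
  have e₂ : ι ≫ (g₂ ≫ U₂.ι) = U₁₂.ι := by
    rw [← Category.assoc, key₂, X.homOfLE_ι]
  have hgg : g₁ ≫ U₁.ι = g₂ ≫ U₂.ι := by
    apply ext_of_isDominant_of_isSeparated (W := U₁₂.toScheme) f _ ι (e₁.trans e₂.symm)
    rw [Category.assoc, Category.assoc, ← hh₁, ← hh₂, fac₁, fac₂]
  set v : V := ⟨f.base x₁, hvmem⟩ with hv
  have hViv : V.ι.base v = f.base x₁ := rfl
  have hg₁v : (g₁ ≫ U₁.ι).base v = x₁ := by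
    have h' : h₁.base (g₁.base v) = h₁.base ⟨x₁, hx₁⟩ := by
      rw [hb₁]; show (g₁ ≫ h₁).base v = _; rw [fac₁, hViv]
    have h'' : g₁.base v = ⟨x₁, hx₁⟩ :=
      (inferInstance : IsOpenImmersion h₁).base_open.injective h'
    exact (congrArg (fun p => U₁.ι.base p) h'').trans rfl
  have hg₂v : (g₂ ≫ U₂.ι).base v = x₂ := by
    have h' : h₂.base (g₂.base v) = h₂.base ⟨x₂, hx₂⟩ := by
      rw [hb₂]; show (g₂ ≫ h₂).base v = _; rw [fac₂, hViv, hfx]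
    have h'' : g₂.base v = ⟨x₂, hx₂⟩ :=
      (inferInstance : IsOpenImmersion h₂).base_open.injective h'
    exact (congrArg (fun p => U₂.ι.base p) h'').trans rfl
  rw [← hg₁v, ← hg₂v, hgg]

/-- Let `k` be an algebraically closed field of characteristic zero, let `X`
and `Y` be integral separated schemes of finite type over `k` with `Y` normal (all local rings
of `Y` are integrally closed domains), and let `f : X ⟶ Y` be a birational morphism. Then the
set `U₀` of points at which `f` is a local isomorphism is open, and the restriction of `f` to
the open subscheme `U₀` is an open immersion (in particular `f` induces an isomorphism of
`k`-schemes from `U₀` onto the open subscheme `f(U₀)` of `Y`). -/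
theorem stmt5 {k : Type u} [Field k] [IsAlgClosed k] [CharZero k]
    {X Y : Scheme.{u}} [IsIntegral X] [IsIntegral Y]
    (sX : X ⟶ Spec (CommRingCat.of k)) (sY : Y ⟶ Spec (CommRingCat.of k))
    [LocallyOfFiniteType sX] [QuasiCompact sX] [IsSeparated sX]
    [LocallyOfFiniteType sY] [QuasiCompact sY] [IsSeparated sY]
    (hYnormal : ∀ y : Y, IsDomain (Y.presheaf.stalk y) ∧
      IsIntegrallyClosed (Y.presheaf.stalk y))
    (f : X ⟶ Y) (hf : f ≫ sY = sX)
    [IsDominant f] (hbir : IsIso (f.stalkMap (genericPoint X))) :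
    ∃ hopen : IsOpen {x : X | ∃ U : X.Opens, x ∈ U ∧ IsOpenImmersion (U.ι ≫ f)},
      IsOpenImmersion
        (Scheme.Opens.ι
            (X := X) ⟨{x : X | ∃ U : X.Opens, x ∈ U ∧ IsOpenImmersion (U.ι ≫ f)}, hopen⟩
          ≫ f) := by
  haveI hsXsep : IsSeparated (f ≫ sY) := by rw [hf]; infer_instance
  haveI hfsep : IsSeparated f := IsSeparated.of_comp f sY
  have hopen : IsOpen {x : X | ∃ U : X.Opens, x ∈ U ∧ IsOpenImmersion (U.ι ≫ f)} := by
    rw [isOpen_iff_forall_mem_open]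
    rintro x ⟨U, hxU, hU⟩
    exact ⟨U, fun x' hx' => ⟨U, hx', hU⟩, U.isOpen, hxU⟩
  refine ⟨hopen, ?_⟩
  set U₀ : X.Opens := ⟨{x : X | ∃ U : X.Opens, x ∈ U ∧ IsOpenImmersion (U.ι ≫ f)}, hopen⟩
    with hU₀
  rw [isOpenImmersion_iff_stalk]
  constructor
  · apply Topology.IsOpenEmbedding.of_continuous_injective_isOpenMap
    · exact Scheme.Hom.continuous _
    · intro a b hab
      obtain ⟨Ua, hUa, hUai⟩ := a.2
      obtain ⟨Ub, hUb, hUbi⟩ := b.2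
      have hfeq : f.base a.1 = f.base b.1 := by exact hab
      exact Subtype.ext (stmt5_inj f hUa hUb hfeq)
    · intro W hW
      rw [isOpen_iff_forall_mem_open]
      rintro y ⟨x, hxW, rfl⟩
      obtain ⟨U, hxU, hUi⟩ := x.2
      refine ⟨(U.ι ≫ f).base '' (U.ι.base ⁻¹' (U₀.ι.base '' W)), ?_, ?_, ?_⟩
      · rintro _ ⟨u, hu, rfl⟩
        obtain ⟨w, hwW, hw⟩ := hu
        exact ⟨w, hwW, by simp only [Scheme.Hom.comp_apply]; rw [hw]⟩
      · exact hUi.base_open.isOpenMap _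
          ((U₀.ι.isOpenEmbedding.isOpenMap _ hW).preimage (Scheme.Hom.continuous _))
      · exact ⟨⟨x.1, hxU⟩, ⟨x, hxW, rfl⟩, rfl⟩
  · intro x
    obtain ⟨U, hxU, hUi⟩ := x.2
    rw [Scheme.Hom.stalkMap_comp]
    have h1 : IsIso ((U.ι ≫ f).stalkMap ⟨x.1, hxU⟩) := (isOpenImmersion_iff_stalk.mp hUi).2 _
    simp only [Scheme.Hom.stalkMap_comp] at h1
    haveI : IsIso (U.ι.stalkMap ⟨x.1, hxU⟩) := (isOpenImmersion_iff_stalk.mp inferInstance).2 _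
    have h2 : IsIso (f.stalkMap (U.ι.base ⟨x.1, hxU⟩)) :=
      IsIso.of_isIso_fac_right (f := U.ι.stalkMap ⟨x.1, hxU⟩) (hh := h1)
        (Scheme.Hom.stalkMap_comp U.ι f ⟨x.1, hxU⟩).symm
    have heq : U.ι.base ⟨x.1, hxU⟩ = U₀.ι.base x := rfl
    rw [heq] at h2
    haveI : IsIso (U₀.ι.stalkMap x) := (isOpenImmersion_iff_stalk.mp inferInstance).2 _
    exact IsIso.comp_isIso' h2 inferInstance
end
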